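/- Let P, Q be graded posets with rank functions r, let f : P → Q be order-preserving with r(f(x)) ≤ r(x) for all x ∈ P, let G, H be copresheaves of abelian groups on P, Q respectively, and let t : G ⇝ H be an f-homomorphism. Suppose (P,G) and (Q,H) admit cellular forms Λ(P,G) and Λ(Q,H). Then there exists a unique ℤ-linear map Φ : Λ(P,G) → Λ(Q,H) such that: (1) Φ maps Λ(P,G)_x into Λ(Q,H)_{f(x)} and satisfies Φ∂ = ∂Φ on Λ(P,G)_x whenever r(f(x)) = r(x); (2) Φ = 0 on Λ(P,G)_x whenever r(f(x)) < r(x); (3) Φ equals t on Λ(P,G)_{x₀} = G(x₀) for every rank-zero element x₀. Moreover this unique Φ satisfies Φ∂ = ∂Φ on all of Λ(P,G). -/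

import Mathlib

open CategoryTheory Classical

/-- A rank function making `P` a graded poset: minimal elements have rank `0`, the rank
increases by `1` along covering relations, and is strictly monotone. -/
def IsGrading (P : Type) [PartialOrder P] (r : P → ℕ) : Prop :=
  (∀ x : P, IsMin x → r x = 0) ∧ (∀ x y : P, x ⋖ y → r y = r x + 1) ∧
    ∀ x y : P, x < y → r x < r y

/-- A cellular form of a pair `(P, G)` where `P` is a poset graded by `r` and `G` is a
copresheaf of abelian groups on `P` (a functor `P ⥤ AddCommGrp`).

It consists of a `P`-graded differential `ℤ`-module `Λ = ⊕_{x∈P} Λ_x`, the differential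
being recorded by its components `δ x y : Λ_x →+ Λ_y`, together with the maps
`e x y : Λ_y →+ G(x)` (for `y ≤ x` of rank `0`) realising the isomorphism of copresheaves
`(x ↦ H₀(Λ_{≤x})) ≅ G`, such that:

* `∂` maps `Λ_x` into `⊕_{y⋖x} Λ_y` (fields `delta_support`, `delta_fin`) and `∂∂ = 0`
  (field `delta_delta`); hence each `Λ_{≤x} = ⊕_{y≤x} Λ_y` is a chain complex graded by
  rank;
* `Λ_{≤x}` has trivial homology in all positive degrees (field `exact_pos`: every cycle
  of positive degree supported below `x` is a boundary of a chain supported below `x`);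
* the copresheaf `x ↦ H₀(Λ_{≤x})` (whose extension maps are induced by the inclusions
  `Λ_{≤x} ↪ Λ_{≤x'}`) is isomorphic to `G` via the maps induced by `e` (fields
  `e_natural`, `e_surj`, `e_ker`: `e` is compatible with the extension maps of `G`, and
  the induced map `H₀(Λ_{≤x}) → G(x)` is surjective and injective — an element of degree
  `0` maps to `0` iff it is a boundary). -/
structure CellularForm (P : Type) [PartialOrder P] (r : P → ℕ)
    (G : P ⥤ AddCommGrpCat.{0}) where
  Λ : P → Type
  [grp : ∀ x, AddCommGroup (Λ x)]
  δ : ∀ x y : P, Λ x →+ Λ y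
  e : ∀ x y : P, y ≤ x → r y = 0 → (Λ y →+ G.obj x)
  delta_support : ∀ x y : P, ¬(y ⋖ x) → δ x y = 0
  delta_fin : ∀ (x : P) (a : Λ x), {y : P | δ x y a ≠ 0}.Finite
  delta_delta : ∀ (x z : P) (a : Λ x), (∑ᶠ y : P, δ y z (δ x y a)) = 0
  exact_pos : ∀ (x : P) (q : ℕ) (a : ∀ y : P, Λ y),
    {y : P | a y ≠ 0}.Finite →
    (∀ y, a y ≠ 0 → y ≤ x ∧ r y = q + 1) →
    (∀ z, (∑ᶠ y : P, δ y z (a y)) = 0) →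
    ∃ b : ∀ y : P, Λ y, {y : P | b y ≠ 0}.Finite ∧
      (∀ y, b y ≠ 0 → y ≤ x ∧ r y = q + 2) ∧ ∀ y, a y = ∑ᶠ w : P, δ w y (b w)
  e_natural : ∀ (x x' y : P) (h : y ≤ x) (h' : x ≤ x') (h0 : r y = 0) (a : Λ y),
    G.map (homOfLE h') (e x y h h0 a) = e x' y (h.trans h') h0 a
  e_surj : ∀ (x : P) (g : G.obj x), ∃ a : ∀ y : P, Λ y,
    {y : P | a y ≠ 0}.Finite ∧ (∀ y, a y ≠ 0 → y ≤ x ∧ r y = 0) ∧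
    (∑ᶠ y : P, if h : y ≤ x ∧ r y = 0 then e x y h.1 h.2 (a y) else 0) = g
  e_ker : ∀ (x : P) (a : ∀ y : P, Λ y), {y : P | a y ≠ 0}.Finite →
    (∀ y, a y ≠ 0 → y ≤ x ∧ r y = 0) →
    ((∑ᶠ y : P, if h : y ≤ x ∧ r y = 0 then e x y h.1 h.2 (a y) else 0) = 0 ↔
      ∃ b : ∀ y : P, Λ y, {y : P | b y ≠ 0}.Finite ∧
        (∀ y, b y ≠ 0 → y ≤ x ∧ r y = 1) ∧ ∀ y, a y = ∑ᶠ w : P, δ w y (b w))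

attribute [instance] CellularForm.grp

/-- The property, for a given `P`-graded differential `ℤ`-module `(Λ, δ)`, of being a
cellular form of `(P, G)`; see `CellularForm` for a description of the fields, the only
difference being that here the realising maps `e` are merely required to exist. -/
structure IsCellularForm (P : Type) [PartialOrder P] (r : P → ℕ)
    (G : P ⥤ AddCommGrpCat.{0}) (Λ : P → Type) [inst : ∀ x, AddCommGroup (Λ x)]
    (δ : ∀ x y : P, Λ x →+ Λ y) : Prop where
  delta_support : ∀ x y : P, ¬(y ⋖ x) → δ x y = 0
  delta_fin : ∀ (x : P) (a : Λ x), {y : P | δ x y a ≠ 0}.Finite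
  delta_delta : ∀ (x z : P) (a : Λ x), (∑ᶠ y : P, δ y z (δ x y a)) = 0
  exact_pos : ∀ (x : P) (q : ℕ) (a : ∀ y : P, Λ y),
    {y : P | a y ≠ 0}.Finite →
    (∀ y, a y ≠ 0 → y ≤ x ∧ r y = q + 1) →
    (∀ z, (∑ᶠ y : P, δ y z (a y)) = 0) →
    ∃ b : ∀ y : P, Λ y, {y : P | b y ≠ 0}.Finite ∧
      (∀ y, b y ≠ 0 → y ≤ x ∧ r y = q + 2) ∧ ∀ y, a y = ∑ᶠ w : P, δ w y (b w)
  hom_zero : ∃ e : ∀ x y : P, y ≤ x → r y = 0 → (Λ y →+ G.obj x),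
    (∀ (x x' y : P) (h : y ≤ x) (h' : x ≤ x') (h0 : r y = 0) (a : Λ y),
      G.map (homOfLE h') (e x y h h0 a) = e x' y (h.trans h') h0 a) ∧
    (∀ (x : P) (g : G.obj x), ∃ a : ∀ y : P, Λ y,
      {y : P | a y ≠ 0}.Finite ∧ (∀ y, a y ≠ 0 → y ≤ x ∧ r y = 0) ∧
      (∑ᶠ y : P, if h : y ≤ x ∧ r y = 0 then e x y h.1 h.2 (a y) else 0) = g) ∧
    (∀ (x : P) (a : ∀ y : P, Λ y), {y : P | a y ≠ 0}.Finite →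
      (∀ y, a y ≠ 0 → y ≤ x ∧ r y = 0) →
      ((∑ᶠ y : P, if h : y ≤ x ∧ r y = 0 then e x y h.1 h.2 (a y) else 0) = 0 ↔
        ∃ b : ∀ y : P, Λ y, {y : P | b y ≠ 0}.Finite ∧
          (∀ y, b y ≠ 0 → y ≤ x ∧ r y = 1) ∧ ∀ y, a y = ∑ᶠ w : P, δ w y (b w)))
/-- Transport along an equality of indices, as a homomorphism between the graded pieces
of a cellular form. -/
def CellularForm.cast {Q : Type} [PartialOrder Q] {r' : Q → ℕ} {H : Q ⥤ AddCommGrpCat.{0}}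
    (C' : CellularForm Q r' H) {a b : Q} (h : a = b) : C'.Λ a →+ C'.Λ b := by
  subst h; exact AddMonoidHom.id _

section
variable {P Q : Type} [PartialOrder P] [PartialOrder Q] {r : P → ℕ} {r' : Q → ℕ}
  {f : P → Q} {G : P ⥤ AddCommGrpCat.{0}} {H : Q ⥤ AddCommGrpCat.{0}}

/-- The defining conditions for a morphism of cellular forms `Φ : Λ(P,G) → Λ(Q,H)`
associated with `f` and the `f`-homomorphism `t`:
(1) `Φ` maps `Λ(P,G)_x` into `Λ(Q,H)_{f(x)}` (by its very type) and commutes with the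
differentials on `Λ(P,G)_x` whenever `r(f(x)) = r(x)` (the `z`-component of `Φ(∂a)`,
i.e. the sum of `Φ_y (∂a)_y` over `y` with `f y = z`, equals the `z`-component of
`∂(Φ a)`);
(2) `Φ = 0` on `Λ(P,G)_x` whenever `r(f(x)) < r(x)`;
(3) `Φ` equals `t` on `Λ(P,G)_{x₀} = G(x₀)` for rank-zero `x₀` (under the
identifications `e` of the rank-zero pieces with the values of the copresheaves). -/
def IsCellularMorphism (hfr : ∀ x, r' (f x) ≤ r x)
    (t : ∀ x : P, G.obj x →+ H.obj (f x))
    (C : CellularForm P r G) (C' : CellularForm Q r' H)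
    (Φ : ∀ x : P, C.Λ x →+ C'.Λ (f x)) : Prop :=
  (∀ x : P, r' (f x) = r x → ∀ (a : C.Λ x) (z : Q),
    (∑ᶠ y : P, if h : f y = z then (C'.cast h) (Φ y (C.δ x y a)) else 0) =
      C'.δ (f x) z (Φ x a)) ∧
  (∀ x : P, r' (f x) < r x → Φ x = 0) ∧
  (∀ (x : P) (h0 : r x = 0) (a : C.Λ x),
    C'.e (f x) (f x) le_rfl (Nat.le_zero.mp (h0 ▸ hfr x)) (Φ x a) =
      t x (C.e x x le_rfl h0 a))

end

/-!
`Φ` is forced rank by rank. In rank `0` it must be `e'⁻¹ ∘ t ∘ e`. If `Φ` commutes with `∂`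
below `x`, with `r(x) = n + 1`, then `Φ(∂a)` is a cycle of degree `n` in `Λ(Q,H)_{≤f(x)}`
(for `n = 0`: its augmentation is `t` of the augmentation of the boundary `∂a`, i.e. `0`), so by
acyclicity it is `∂` of a chain of degree `n + 1` below `f(x)`. Such a chain is concentrated
on `f(x)` when `r(f(x)) = r(x)`, giving `Φ(a)`, and vanishes when `r(f(x)) < r(x)`, where
`Φ(a) = 0`. Acyclicity also makes `∂` injective on a single piece of positive rank, so the
lift `Φ(a)` is unique.
-/

theorem finsum_comm_of_finite {α β M : Type*} [AddCommMonoid M] {F : α → β → M}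
    {s : Set α} {t : Set β} (hs : s.Finite) (ht : t.Finite)
    (hF : ∀ a b, F a b ≠ 0 → a ∈ s ∧ b ∈ t) :
    ∑ᶠ a, ∑ᶠ b, F a b = ∑ᶠ b, ∑ᶠ a, F a b := by
  have inner_a : ∀ a, ∑ᶠ b, F a b = ∑ b ∈ ht.toFinset, F a b := fun a =>
    finsum_eq_sum_of_support_subset _ fun b hb => by simpa using (hF a b hb).2
  have inner_b : ∀ b, ∑ᶠ a, F a b = ∑ a ∈ hs.toFinset, F a b := fun b =>
    finsum_eq_sum_of_support_subset _ fun a ha => by simpa using (hF a b ha).1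
  simp_rw [inner_a, inner_b]
  rw [finsum_eq_sum_of_support_subset _ (s := hs.toFinset), finsum_eq_sum_of_support_subset _
    (s := ht.toFinset), Finset.sum_comm]
  · intro b hb
    by_contra hbt
    refine hb (Finset.sum_eq_zero fun a _ => ?_)
    by_contra h
    exact hbt (by simpa using (hF a b h).2)
  · intro a ha
    by_contra has
    refine ha (Finset.sum_eq_zero fun b _ => ?_)
    by_contra h
    exact has (by simpa using (hF a b h).1)

namespace AddMonoidHom

variable {A B C : Type*} [AddGroup A] [AddGroup B] [AddGroup C]

/-- The factorisation of `g` through `i` when `i` is injective with range containing that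
of `g`, and `0` otherwise. -/
noncomputable def liftOfRangeLE (i : B →+ C) (g : A →+ C) : A →+ B :=
  if h : Function.Injective i ∧ g.range ≤ i.range then
    (ofInjective h.1).symm.toAddMonoidHom.comp (g.codRestrict i.range fun a => h.2 ⟨a, rfl⟩)
  else 0

theorem apply_liftOfRangeLE {i : B →+ C} {g : A →+ C} (hi : Function.Injective i)
    (hg : g.range ≤ i.range) (a : A) : i (i.liftOfRangeLE g a) = g a := by
  rw [liftOfRangeLE, dif_pos ⟨hi, hg⟩]
  exact congrArg Subtype.val ((ofInjective hi).apply_symm_apply _)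

end AddMonoidHom

namespace IsGrading

variable {P : Type} [PartialOrder P] {r : P → ℕ}

theorem monotone (hr : IsGrading P r) : Monotone r := fun _ _ h =>
  h.eq_or_lt.elim (fun h => h ▸ le_rfl) fun h => (hr.2.2 _ _ h).le

theorem eq_of_le_of_rank_le (hr : IsGrading P r) {x y : P} (h : x ≤ y) (hr_le : r y ≤ r x) :
    x = y :=
  h.eq_or_lt.resolve_right fun h => (hr.2.2 _ _ h).not_ge hr_le

theorem rank_covBy (hr : IsGrading P r) {x y : P} (h : x ⋖ y) : r y = r x + 1 := hr.2.1 x y h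

end IsGrading

namespace CellularForm

section Chains

variable {P : Type} [PartialOrder P] {r : P → ℕ} {G : P ⥤ AddCommGrpCat.{0}}
  (C : CellularForm P r G)

noncomputable def deltaHom (x : P) : C.Λ x →+ ∀ y, C.Λ y := AddMonoidHom.pi fun y => C.δ x y

noncomputable def totalDelta (c : ∀ y, C.Λ y) : ∀ y, C.Λ y := fun z => ∑ᶠ y, C.δ y z (c y)

noncomputable def augHom (x y : P) : C.Λ y →+ G.obj x :=
  if h : y ≤ x ∧ r y = 0 then C.e x y h.1 h.2 else 0

/-- The augmentation `Λ_{≤x} → H₀(Λ_{≤x}) ≅ G(x)` on chains of degree `0`. -/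
noncomputable def augment (x : P) (c : ∀ y, C.Λ y) : G.obj x := ∑ᶠ y, C.augHom x y (c y)

/-- A cycle of degree `n` of the augmented chain complex `Λ_{≤x} → G(x)`. -/
structure IsAugmentedCycle (x : P) (n : ℕ) (c : ∀ y, C.Λ y) : Prop where
  finite : {y | c y ≠ 0}.Finite
  le_of_ne_zero : ∀ y, c y ≠ 0 → y ≤ x ∧ r y = n
  totalDelta_eq_zero : C.totalDelta c = 0
  augment_eq_zero : n = 0 → C.augment x c = 0

variable {C}

theorem augment_eq (x : P) (c : ∀ y, C.Λ y) :
    C.augment x c = ∑ᶠ y, if h : y ≤ x ∧ r y = 0 then C.e x y h.1 h.2 (c y) else 0 :=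
  finsum_congr fun y => by unfold augHom; split_ifs <;> rfl

theorem augHom_self {x : P} (hx : r x = 0) : C.augHom x x = C.e x x le_rfl hx := by
  rw [augHom, dif_pos ⟨le_rfl, hx⟩]

theorem totalDelta_single (x : P) (v : C.Λ x) : C.totalDelta (Pi.single x v) = C.deltaHom x v :=
  funext fun z => (finsum_eq_single (fun y => C.δ y z (Pi.single x v y)) x fun y hy => by
    rw [Pi.single_eq_of_ne hy, map_zero]).trans (by rw [Pi.single_eq_same]; rfl)

theorem augment_single (x y : P) (v : C.Λ y) : C.augment x (Pi.single y v) = C.augHom x y v :=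
  (finsum_eq_single (fun w => C.augHom x w (Pi.single y v w)) y fun w hw => by
    rw [Pi.single_eq_of_ne hw, map_zero]).trans (by rw [Pi.single_eq_same])

theorem covBy_of_delta_ne_zero {x y : P} {a : C.Λ x} (h : C.δ x y a ≠ 0) : y ⋖ x := by
  by_contra hcov
  rw [C.delta_support x y hcov] at h
  exact h rfl

theorem delta_eq_zero_of_rank_eq_zero (hr : IsGrading P r) {x : P} (hx : r x = 0) (y : P) :
    C.δ x y = 0 :=
  C.delta_support x y fun h => by have := hr.rank_covBy h; omega

theorem deltaHom_support_finite (x : P) (a : C.Λ x) : {y | C.deltaHom x a y ≠ 0}.Finite :=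
  C.delta_fin x a

theorem deltaHom_eq_zero_of_rank_eq_zero (hr : IsGrading P r) {x : P} (hx : r x = 0) :
    C.deltaHom x = 0 :=
  AddMonoidHom.ext fun v => funext fun y => by
    simp [deltaHom, delta_eq_zero_of_rank_eq_zero hr hx]

theorem totalDelta_deltaHom (x : P) (a : C.Λ x) : C.totalDelta (C.deltaHom x a) = 0 :=
  funext (C.delta_delta x · a)

theorem augment_deltaHom (hr : IsGrading P r) {x : P} (hx : r x = 1) (a : C.Λ x) :
    C.augment x (C.deltaHom x a) = 0 := by
  rw [augment_eq]
  refine (C.e_ker x _ (deltaHom_support_finite x a) fun y hy => ?_).mpr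
    ⟨Pi.single x a, (Set.finite_singleton x).subset fun y hy => ?_, fun y hy => ?_,
      fun y => (congrFun (totalDelta_single x a) y).symm⟩
  · have hcov := covBy_of_delta_ne_zero hy
    exact ⟨hcov.le, by have := hr.rank_covBy hcov; omega⟩
  · by_contra hne
    exact hy (Pi.single_eq_of_ne hne a)
  · obtain rfl : y = x := by_contra fun hne => hy (Pi.single_eq_of_ne hne a)
    exact ⟨le_rfl, hx⟩

namespace IsAugmentedCycle

variable {x : P} {n : ℕ} {c : ∀ y, C.Λ y}

theorem exists_boundary (hc : C.IsAugmentedCycle x n c) :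
    ∃ b : ∀ y, C.Λ y, (∀ y, b y ≠ 0 → y ≤ x ∧ r y = n + 1) ∧ c = C.totalDelta b := by
  obtain ⟨b, -, hb, hcb⟩ : ∃ b : ∀ y, C.Λ y, {y | b y ≠ 0}.Finite ∧
      (∀ y, b y ≠ 0 → y ≤ x ∧ r y = n + 1) ∧ ∀ y, c y = ∑ᶠ w, C.δ w y (b w) := by
    cases n with
    | zero =>
      exact (C.e_ker x c hc.finite hc.le_of_ne_zero).mp (augment_eq x c ▸ hc.augment_eq_zero rfl)
    | succ q =>
      exact C.exact_pos x q c hc.finite hc.le_of_ne_zero (congrFun hc.totalDelta_eq_zero)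
  exact ⟨b, hb, funext hcb⟩

theorem eq_zero (hr : IsGrading P r) (hc : C.IsAugmentedCycle x n c) (hx : r x ≤ n) : c = 0 := by
  obtain ⟨b, hb, rfl⟩ := hc.exists_boundary
  have hb0 : b = 0 := funext fun y => by_contra fun hy => by
    have := hr.monotone (hb y hy).1
    have := (hb y hy).2
    omega
  exact funext fun z => finsum_eq_zero_of_forall_eq_zero fun y => by simp [hb0]

theorem exists_eq_deltaHom (hr : IsGrading P r) (hc : C.IsAugmentedCycle x n c)
    (hx : r x ≤ n + 1) : ∃ v, c = C.deltaHom x v := by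
  obtain ⟨b, hb, rfl⟩ := hc.exists_boundary
  refine ⟨b x, funext fun z => finsum_eq_single _ x fun y hy => ?_⟩
  have hby : b y = 0 := by_contra fun hby =>
    hy (hr.eq_of_le_of_rank_le (hb y hby).1 (by rw [(hb y hby).2]; exact hx))
  rw [hby, map_zero]

end IsAugmentedCycle

theorem isAugmentedCycle_single {x : P} {v : C.Λ x}
    (hv : C.deltaHom x v = 0) (haug : ∀ hx : r x = 0, C.e x x le_rfl hx v = 0) :
    C.IsAugmentedCycle x (r x) (Pi.single x v) where
  finite := (Set.finite_singleton x).subset fun y hy => by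
    by_contra hne
    exact hy (Pi.single_eq_of_ne hne v)
  le_of_ne_zero y hy := by
    obtain rfl : y = x := by_contra fun hne => hy (Pi.single_eq_of_ne hne v)
    exact ⟨le_rfl, rfl⟩
  totalDelta_eq_zero := by rw [totalDelta_single, hv]
  augment_eq_zero hx := by rw [augment_single, augHom_self hx, haug hx]

theorem deltaHom_injective (hr : IsGrading P r) {x : P} (hx : 0 < r x) :
    Function.Injective (C.deltaHom x) :=
  (injective_iff_map_eq_zero _).mpr fun v hv => by
    have := (isAugmentedCycle_single hv fun h => by omega).eq_zero hr le_rfl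
    rwa [Pi.single_eq_zero_iff] at this

theorem e_self_bijective (hr : IsGrading P r) {x : P} (hx : r x = 0) :
    Function.Bijective (C.e x x le_rfl hx) := by
  refine ⟨(injective_iff_map_eq_zero _).mpr fun v hv => ?_, fun g => ?_⟩
  · have hδ : C.deltaHom x v = 0 := by rw [deltaHom_eq_zero_of_rank_eq_zero hr hx]; rfl
    have := (isAugmentedCycle_single hδ fun _ => hv).eq_zero hr le_rfl
    rwa [Pi.single_eq_zero_iff] at this
  · obtain ⟨a, -, ha, rfl⟩ := C.e_surj x g
    have hsingle : a = Pi.single x (a x) := funext fun y => by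
      by_cases hy : y = x
      · subst hy; rw [Pi.single_eq_same]
      · rw [Pi.single_eq_of_ne hy]
        exact by_contra fun hay =>
          hy (hr.eq_of_le_of_rank_le (ha y hay).1 (by rw [hx]; exact Nat.zero_le _))
    refine ⟨a x, ?_⟩
    rw [← augment_eq, hsingle, augment_single, augHom_self hx, Pi.single_eq_same]

end Chains

section Pushforward

variable {P Q : Type} [PartialOrder Q] {r' : Q → ℕ}
  {H : Q ⥤ AddCommGrpCat.{0}} (C' : CellularForm Q r' H) {Λ : P → Type}
  [∀ y, AddCommGroup (Λ y)] {f : P → Q}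

noncomputable def pushforward (Φ : ∀ y, Λ y →+ C'.Λ (f y)) (c : ∀ y, Λ y) : ∀ z, C'.Λ z :=
  fun z => ∑ᶠ y, if h : f y = z then C'.cast h (Φ y (c y)) else 0

variable {C'} {Φ : ∀ y, Λ y →+ C'.Λ (f y)} {c : ∀ y, Λ y}

theorem exists_of_pushforward_ne_zero {z : Q} (h : C'.pushforward Φ c z ≠ 0) :
    ∃ y, f y = z ∧ Φ y (c y) ≠ 0 := by
  obtain ⟨y, hy⟩ := not_forall.1 fun h' => h (finsum_eq_zero_of_forall_eq_zero h')
  by_cases hfy : f y = z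
  · subst hfy
    exact ⟨y, rfl, by rwa [dif_pos rfl] at hy⟩
  · exact absurd (dif_neg hfy) hy

theorem pushforward_support_finite (hc : {y | c y ≠ 0}.Finite) :
    {z | C'.pushforward Φ c z ≠ 0}.Finite :=
  (hc.image f).subset fun z hz => by
    obtain ⟨y, rfl, hy⟩ := exists_of_pushforward_ne_zero hz
    exact ⟨y, fun h => hy (by rw [h, map_zero]), rfl⟩

theorem finsum_pushforward {M : Type*} [AddCommMonoid M] (g : ∀ z, C'.Λ z →+ M)
    (hc : {y | c y ≠ 0}.Finite) :
    ∑ᶠ z, g z (C'.pushforward Φ c z) = ∑ᶠ y, g (f y) (Φ y (c y)) := by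
  have hterm : ∀ y z, (if h : f y = z then C'.cast h (Φ y (c y)) else 0) ≠ 0 →
      c y ≠ 0 ∧ f y = z := fun y z h => by
    by_cases hfy : f y = z
    · rw [dif_pos hfy] at h
      exact ⟨fun hy => h (by rw [hy, map_zero, map_zero]), hfy⟩
    · exact absurd (dif_neg hfy) h
  calc ∑ᶠ z, g z (C'.pushforward Φ c z)
      = ∑ᶠ z, ∑ᶠ y, g z (if h : f y = z then C'.cast h (Φ y (c y)) else 0) :=
        finsum_congr fun z => map_finsum (g z) (hc.subset fun y hy => (hterm y z hy).1)
    _ = ∑ᶠ y, ∑ᶠ z, g z (if h : f y = z then C'.cast h (Φ y (c y)) else 0) :=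
        finsum_comm_of_finite (hc.image f) hc fun z y h => by
          have := hterm y z fun h' => h (by rw [h', map_zero])
          exact ⟨⟨y, this⟩, this.1⟩
    _ = ∑ᶠ y, g (f y) (Φ y (c y)) := finsum_congr fun y =>
        (finsum_eq_single _ (f y) fun z hz => by rw [dif_neg (Ne.symm hz), map_zero]).trans
          (by rw [dif_pos rfl]; rfl)

theorem pushforward_zero : C'.pushforward Φ 0 = 0 :=
  funext fun z => finsum_eq_zero_of_forall_eq_zero fun y => by
    split_ifs <;> simp

theorem pushforward_add {c' : ∀ y, Λ y} (hc : {y | c y ≠ 0}.Finite)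
    (hc' : {y | c' y ≠ 0}.Finite) :
    C'.pushforward Φ (c + c') = C'.pushforward Φ c + C'.pushforward Φ c' := by
  have hfin : ∀ {d : ∀ y, Λ y}, {y | d y ≠ 0}.Finite → ∀ z,
      (Function.support fun y => if h : f y = z then C'.cast h (Φ y (d y)) else 0).Finite :=
    fun hd z => hd.subset fun y hy h0 => hy <| by
      show (if h : f y = z then C'.cast h (Φ y (_ : Λ y)) else 0) = 0
      rw [h0]
      split_ifs <;> simp
  funext z
  refine (finsum_congr fun y => ?_).trans (finsum_add_distrib (hfin hc z) (hfin hc' z))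
  split_ifs <;> simp

theorem pushforward_congr {Ψ : ∀ y, Λ y →+ C'.Λ (f y)} (h : ∀ y, c y ≠ 0 → Φ y = Ψ y) :
    C'.pushforward Φ c = C'.pushforward Ψ c :=
  funext fun z => finsum_congr fun y => by
    by_cases hy : c y = 0
    · simp [hy]
    · rw [h y hy]

end Pushforward

section ChainMap

variable {P Q : Type} [PartialOrder P] [PartialOrder Q] {r : P → ℕ} {r' : Q → ℕ}
  {G : P ⥤ AddCommGrpCat.{0}} {H : Q ⥤ AddCommGrpCat.{0}} {f : P → Q}
  (C : CellularForm P r G) (C' : CellularForm Q r' H)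

/-- `a ↦ Φ(∂a)` on `Λ(P,G)_x`. -/
noncomputable def pushDelta (Φ : ∀ y, C.Λ y →+ C'.Λ (f y)) (x : P) : C.Λ x →+ ∀ z, C'.Λ z where
  toFun a := C'.pushforward Φ (C.deltaHom x a)
  map_zero' := by rw [map_zero, pushforward_zero]
  map_add' a b := by
    rw [map_add]
    exact pushforward_add (deltaHom_support_finite x a) (deltaHom_support_finite x b)

def IsChainMapAt (Φ : ∀ y, C.Λ y →+ C'.Λ (f y)) (x : P) : Prop :=
  C.pushDelta C' Φ x = (C'.deltaHom (f x)).comp (Φ x)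

variable {C C'} {Φ : ∀ y, C.Λ y →+ C'.Λ (f y)}

theorem pushDelta_apply (x : P) (a : C.Λ x) :
    C.pushDelta C' Φ x a = C'.pushforward Φ (C.deltaHom x a) := rfl

theorem isChainMapAt_iff {x : P} : C.IsChainMapAt C' Φ x ↔ ∀ (a : C.Λ x) (z : Q),
    (∑ᶠ y : P, if h : f y = z then (C'.cast h) (Φ y (C.δ x y a)) else 0) =
      C'.δ (f x) z (Φ x a) := by
  unfold IsChainMapAt
  exact ⟨fun h a z => congrFun (DFunLike.congr_fun h a) z,
    fun h => AddMonoidHom.ext fun a => funext (h a)⟩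

theorem totalDelta_pushforward {c : ∀ y, C.Λ y} (hc : {y | c y ≠ 0}.Finite)
    (hΦ : ∀ y, c y ≠ 0 → C.IsChainMapAt C' Φ y) :
    C'.totalDelta (C'.pushforward Φ c) = C'.pushforward Φ (C.totalDelta c) := by
  funext w
  have hfin : ∀ u, (Function.support fun y => C.δ y u (c y)).Finite := fun u =>
    hc.subset fun y hy h0 => hy (by simp only [h0, map_zero])
  calc C'.totalDelta (C'.pushforward Φ c) w
      = ∑ᶠ y, C'.δ (f y) w (Φ y (c y)) := finsum_pushforward (fun z => C'.δ z w) hc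
    _ = ∑ᶠ y, ∑ᶠ u, if h : f u = w then C'.cast h (Φ u (C.δ y u (c y))) else 0 :=
        finsum_congr fun y => by
          by_cases hy : c y = 0
          · simp only [hy, map_zero]
            exact (finsum_eq_zero_of_forall_eq_zero fun u => by split_ifs <;> simp).symm
          · exact (congrFun (DFunLike.congr_fun (hΦ y hy) (c y)) w).symm
    _ = ∑ᶠ u, ∑ᶠ y, if h : f u = w then C'.cast h (Φ u (C.δ y u (c y))) else 0 :=
        finsum_comm_of_finite hc (hc.biUnion fun y _ => C.delta_fin y (c y)) fun y u h => by
          have hδ : C.δ y u (c y) ≠ 0 := fun h0 => h (by rw [h0]; split_ifs <;> simp)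
          have hy : c y ≠ 0 := fun h0 => hδ (by rw [h0, map_zero])
          exact ⟨hy, Set.mem_biUnion hy hδ⟩
    _ = C'.pushforward Φ (C.totalDelta c) w := finsum_congr fun u => by
        split_ifs with h
        · exact (((C'.cast h).comp (Φ u)).map_finsum (hfin u)).symm
        · exact finsum_zero

theorem augment_pushforward (hf : Monotone f)
    (hfr : ∀ x, r' (f x) ≤ r x) {t : ∀ x : P, G.obj x →+ H.obj (f x)}
    (ht : ∀ (x y : P) (h : x ≤ y) (a : G.obj x),
      t y (G.map (homOfLE h) a) = H.map (homOfLE (hf h)) (t x a))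
    (hΦ : ∀ (y : P) (h0 : r y = 0) (h0' : r' (f y) = 0) (a : C.Λ y),
      C'.e (f y) (f y) le_rfl h0' (Φ y a) = t y (C.e y y le_rfl h0 a))
    {x : P} {c : ∀ y, C.Λ y} (hc : {y | c y ≠ 0}.Finite)
    (hsupp : ∀ y, c y ≠ 0 → y ≤ x ∧ r y = 0) :
    C'.augment (f x) (C'.pushforward Φ c) = t x (C.augment x c) := by
  rw [augment, finsum_pushforward _ hc, augment,
    map_finsum (t x) (hc.subset fun y hy h0 => hy (by rw [h0, map_zero]))]
  refine finsum_congr fun y => ?_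
  by_cases hy : c y = 0
  · simp [hy]
  obtain ⟨hyx, hy0⟩ := hsupp y hy
  have hfy0 : r' (f y) = 0 := by have := hfr y; omega
  rw [augHom, dif_pos ⟨hf hyx, hfy0⟩, augHom, dif_pos ⟨hyx, hy0⟩,
    ← C'.e_natural (f y) (f x) (f y) le_rfl (hf hyx) hfy0, hΦ y hy0 hfy0, ← ht y x hyx,
    C.e_natural y x y le_rfl hyx hy0]

theorem isAugmentedCycle_pushDelta (hr : IsGrading P r) (hf : Monotone f)
    (hfr : ∀ x, r' (f x) ≤ r x) {t : ∀ x : P, G.obj x →+ H.obj (f x)}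
    (ht : ∀ (x y : P) (h : x ≤ y) (a : G.obj x),
      t y (G.map (homOfLE h) a) = H.map (homOfLE (hf h)) (t x a))
    (hΦ_lt : ∀ x, r' (f x) < r x → Φ x = 0)
    (hΦ_zero : ∀ (y : P) (h0 : r y = 0) (h0' : r' (f y) = 0) (a : C.Λ y),
      C'.e (f y) (f y) le_rfl h0' (Φ y a) = t y (C.e y y le_rfl h0 a))
    {x : P} {n : ℕ} (hx : r x = n + 1) (hΦ : ∀ y, r y = n → C.IsChainMapAt C' Φ y)
    (a : C.Λ x) : C'.IsAugmentedCycle (f x) n (C.pushDelta C' Φ x a) := by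
  have rank_of_ne_zero : ∀ y, C.deltaHom x a y ≠ 0 → y ≤ x ∧ r y = n := fun y hy => by
    have hcov := C.covBy_of_delta_ne_zero hy
    exact ⟨hcov.le, by have := hr.rank_covBy hcov; omega⟩
  refine ⟨pushforward_support_finite (deltaHom_support_finite x a), fun z hz => ?_, ?_,
    fun hn => ?_⟩
  · obtain ⟨y, rfl, hy⟩ := exists_of_pushforward_ne_zero hz
    obtain ⟨hyx, hyn⟩ := rank_of_ne_zero y fun h0 => hy (by rw [h0, map_zero])
    have : r' (f y) = r y := (hfr y).eq_or_lt.resolve_right fun hlt => hy (by simp [hΦ_lt y hlt])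
    exact ⟨hf hyx, by omega⟩
  · rw [pushDelta_apply, totalDelta_pushforward (deltaHom_support_finite x a)
      fun y hy => hΦ y (rank_of_ne_zero y hy).2, totalDelta_deltaHom, pushforward_zero]
  · subst hn
    rw [pushDelta_apply,
      augment_pushforward hf hfr ht hΦ_zero (deltaHom_support_finite x a) rank_of_ne_zero,
      augment_deltaHom hr hx, map_zero]

theorem isChainMapAt_of_rank_eq_zero (hr : IsGrading P r) (hr' : IsGrading Q r')
    (hfr : ∀ x, r' (f x) ≤ r x) {x : P} (hx : r x = 0) : C.IsChainMapAt C' Φ x := by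
  refine AddMonoidHom.ext fun a => ?_
  rw [pushDelta_apply, deltaHom_eq_zero_of_rank_eq_zero hr hx, AddMonoidHom.comp_apply,
    deltaHom_eq_zero_of_rank_eq_zero hr' (by have := hfr x; omega)]
  exact pushforward_zero

theorem isChainMapAt_of_lift (hr : IsGrading P r) (hr' : IsGrading Q r') (hf : Monotone f)
    (hfr : ∀ x, r' (f x) ≤ r x) {t : ∀ x : P, G.obj x →+ H.obj (f x)}
    (ht : ∀ (x y : P) (h : x ≤ y) (a : G.obj x),
      t y (G.map (homOfLE h) a) = H.map (homOfLE (hf h)) (t x a))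
    (hΦ_lt : ∀ x, r' (f x) < r x → Φ x = 0)
    (hΦ_zero : ∀ (y : P) (h0 : r y = 0) (h0' : r' (f y) = 0) (a : C.Λ y),
      C'.e (f y) (f y) le_rfl h0' (Φ y a) = t y (C.e y y le_rfl h0 a))
    (hΦ_lift : ∀ x, 0 < r x → r' (f x) = r x →
      (∀ a, ∃ v, C.pushDelta C' Φ x a = C'.deltaHom (f x) v) → C.IsChainMapAt C' Φ x)
    (x : P) : C.IsChainMapAt C' Φ x := by
  induction hn : r x using Nat.strong_induction_on generalizing x with
  | _ n ih =>
  cases n with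
  | zero => exact isChainMapAt_of_rank_eq_zero hr hr' hfr hn
  | succ n =>
    have hcyc := isAugmentedCycle_pushDelta hr hf hfr ht hΦ_lt hΦ_zero hn
      fun y hy => ih n (Nat.lt_succ_self n) y hy
    rcases (hfr x).eq_or_lt with heq | hlt
    · exact hΦ_lift x (by omega) heq fun a => (hcyc a).exists_eq_deltaHom hr' (by omega)
    · refine AddMonoidHom.ext fun a => ?_
      rw [AddMonoidHom.comp_apply, hΦ_lt x hlt, AddMonoidHom.zero_apply, map_zero]
      exact (hcyc a).eq_zero hr' (by omega)

end ChainMap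

section Construction

variable {P Q : Type} [PartialOrder P] [PartialOrder Q] {r : P → ℕ} {r' : Q → ℕ}
  {G : P ⥤ AddCommGrpCat.{0}} {H : Q ⥤ AddCommGrpCat.{0}} {f : P → Q}

noncomputable def cellularMorphism (t : ∀ x : P, G.obj x →+ H.obj (f x))
    (C : CellularForm P r G) (C' : CellularForm Q r' H) (x : P) : C.Λ x →+ C'.Λ (f x) :=
  if h : r x = 0 ∧ r' (f x) = 0 then
    (C'.e (f x) (f x) le_rfl h.2).liftOfRangeLE ((t x).comp (C.e x x le_rfl h.1))
  else if r' (f x) = r x then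
    -- restricting to lower ranks only serves termination: `∂` lands there anyway
    (C'.deltaHom (f x)).liftOfRangeLE
      (C.pushDelta C' (fun y => if r y < r x then cellularMorphism t C C' y else 0) x)
  else 0
termination_by r x

variable {t : ∀ x : P, G.obj x →+ H.obj (f x)} {C : CellularForm P r G}
  {C' : CellularForm Q r' H}

theorem cellularMorphism_of_lt {x : P} (hlt : r' (f x) < r x) :
    cellularMorphism t C C' x = 0 := by
  rw [cellularMorphism, dif_neg (by omega), if_neg (by omega)]

theorem e_cellularMorphism (hr' : IsGrading Q r') {x : P} (h0 : r x = 0) (h0' : r' (f x) = 0)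
    (a : C.Λ x) :
    C'.e (f x) (f x) le_rfl h0' (cellularMorphism t C C' x a) = t x (C.e x x le_rfl h0 a) := by
  have he := C'.e_self_bijective hr' h0'
  rw [cellularMorphism, dif_pos ⟨h0, h0'⟩]
  exact AddMonoidHom.apply_liftOfRangeLE he.1 (fun y _ => AddMonoidHom.mem_range.2 (he.2 y)) a

theorem isChainMapAt_cellularMorphism (hr : IsGrading P r) (hr' : IsGrading Q r') {x : P}
    (hx : 0 < r x) (heq : r' (f x) = r x)
    (hlift : ∀ a, ∃ v, C.pushDelta C' (cellularMorphism t C C') x a = C'.deltaHom (f x) v) :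
    C.IsChainMapAt C' (cellularMorphism t C C') x := by
  have hlower : C.pushDelta C' (fun y => if r y < r x then cellularMorphism t C C' y else 0) x =
      C.pushDelta C' (cellularMorphism t C C') x :=
    AddMonoidHom.ext fun a => pushforward_congr fun y hy =>
      if_pos (by have := hr.rank_covBy (C.covBy_of_delta_ne_zero hy); omega)
  have hunfold : cellularMorphism t C C' x =
      (C'.deltaHom (f x)).liftOfRangeLE (C.pushDelta C' (cellularMorphism t C C') x) := by
    conv_lhs => rw [cellularMorphism, dif_neg (by omega), if_pos heq, hlower]
  refine AddMonoidHom.ext fun a => ?_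
  rw [AddMonoidHom.comp_apply, hunfold, AddMonoidHom.apply_liftOfRangeLE
    (C'.deltaHom_injective hr' (heq ▸ hx)) (fun _ hv => ?_)]
  obtain ⟨b, rfl⟩ := AddMonoidHom.mem_range.1 hv
  obtain ⟨v, hv⟩ := hlift b
  exact ⟨v, hv.symm⟩

theorem isCellularMorphism_cellularMorphism (hr : IsGrading P r) (hr' : IsGrading Q r')
    (hf : Monotone f) (hfr : ∀ x, r' (f x) ≤ r x)
    (ht : ∀ (x y : P) (h : x ≤ y) (a : G.obj x),
      t y (G.map (homOfLE h) a) = H.map (homOfLE (hf h)) (t x a)) :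
    IsCellularMorphism hfr t C C' (cellularMorphism t C C') :=
  ⟨fun x _ => isChainMapAt_iff.1 <|
      isChainMapAt_of_lift hr hr' hf hfr ht (fun _ => cellularMorphism_of_lt)
        (fun _ => e_cellularMorphism hr')
        (fun _ hx heq => isChainMapAt_cellularMorphism hr hr' hx heq) x,
    fun _ => cellularMorphism_of_lt, fun _ h0 => e_cellularMorphism hr' h0 _⟩

end Construction

end CellularForm

namespace IsCellularMorphism

open CellularForm

variable {P Q : Type} [PartialOrder P] [PartialOrder Q] {r : P → ℕ} {r' : Q → ℕ}
  {G : P ⥤ AddCommGrpCat.{0}} {H : Q ⥤ AddCommGrpCat.{0}} {f : P → Q} {hfr : ∀ x, r' (f x) ≤ r x}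
  {t : ∀ x : P, G.obj x →+ H.obj (f x)} {C : CellularForm P r G} {C' : CellularForm Q r' H}
  {Φ : ∀ x, C.Λ x →+ C'.Λ (f x)}

theorem isChainMapAt (hr : IsGrading P r) (hr' : IsGrading Q r') (hf : Monotone f)
    (ht : ∀ (x y : P) (h : x ≤ y) (a : G.obj x),
      t y (G.map (homOfLE h) a) = H.map (homOfLE (hf h)) (t x a))
    (hΦ : IsCellularMorphism hfr t C C' Φ) (x : P) : C.IsChainMapAt C' Φ x :=
  isChainMapAt_of_lift hr hr' hf hfr ht hΦ.2.1 (fun y h0 _ a => hΦ.2.2 y h0 a)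
    (fun x _ heq _ => isChainMapAt_iff.2 (hΦ.1 x heq)) x

theorem unique (hr : IsGrading P r) (hr' : IsGrading Q r') {Ψ : ∀ x, C.Λ x →+ C'.Λ (f x)}
    (hΦ : IsCellularMorphism hfr t C C' Φ) (hΨ : IsCellularMorphism hfr t C C' Ψ) : Φ = Ψ := by
  funext x
  induction hn : r x using Nat.strong_induction_on generalizing x with
  | _ n ih =>
  cases n with
  | zero =>
    have h0' : r' (f x) = 0 := by have := hfr x; omega
    exact AddMonoidHom.ext fun a => (C'.e_self_bijective hr' h0').1 <| by
      rw [hΦ.2.2 x hn a, hΨ.2.2 x hn a]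
  | succ n =>
    rcases (hfr x).eq_or_lt with heq | hlt
    · refine AddMonoidHom.ext fun a => C'.deltaHom_injective hr' (by omega) ?_
      calc C'.deltaHom (f x) (Φ x a) = C.pushDelta C' Φ x a :=
            (DFunLike.congr_fun (isChainMapAt_iff.2 (hΦ.1 x heq)) a).symm
        _ = C.pushDelta C' Ψ x a := pushforward_congr fun y hy => ih n (Nat.lt_succ_self n) y
            (by have := hr.rank_covBy (C.covBy_of_delta_ne_zero hy); omega)
        _ = C'.deltaHom (f x) (Ψ x a) := DFunLike.congr_fun (isChainMapAt_iff.2 (hΨ.1 x heq)) a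
    · rw [hΦ.2.1 x hlt, hΨ.2.1 x hlt]

end IsCellularMorphism

/-- **Statement 4 (morphisms of cellular forms).**  Let `f : P → Q` be order preserving
between graded posets with `r(f(x)) ≤ r(x)`, let `t : G ⇝ H` be an `f`-homomorphism of
copresheaves, and let `Λ(P,G)`, `Λ(Q,H)` be cellular forms.  Then there is a unique
morphism of cellular forms `Φ` associated with `f, t` (conditions (1)–(3) of
`IsCellularMorphism`), and moreover this `Φ` commutes with the differentials on every
`Λ(P,G)_x`, whether `r(f(x)) = r(x)` or not. -/
theorem statement4 (P Q : Type) [PartialOrder P] [PartialOrder Q]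
    (r : P → ℕ) (r' : Q → ℕ) (hr : IsGrading P r) (hr' : IsGrading Q r')
    (f : P → Q) (hf : Monotone f) (hfr : ∀ x, r' (f x) ≤ r x)
    (G : P ⥤ AddCommGrpCat.{0}) (H : Q ⥤ AddCommGrpCat.{0})
    (t : ∀ x : P, G.obj x →+ H.obj (f x))
    (ht : ∀ (x y : P) (h : x ≤ y) (a : G.obj x),
      t y (G.map (homOfLE h) a) = H.map (homOfLE (hf h)) (t x a))
    (C : CellularForm P r G) (C' : CellularForm Q r' H) :
    (∃! Φ : ∀ x : P, C.Λ x →+ C'.Λ (f x), IsCellularMorphism hfr t C C' Φ) ∧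
    (∀ Φ : ∀ x : P, C.Λ x →+ C'.Λ (f x), IsCellularMorphism hfr t C C' Φ →
      ∀ (x : P) (a : C.Λ x) (z : Q),
        (∑ᶠ y : P, if h : f y = z then (C'.cast h) (Φ y (C.δ x y a)) else 0) =
          C'.δ (f x) z (Φ x a)) := by
  have hΦ := CellularForm.isCellularMorphism_cellularMorphism (C := C) (C' := C') hr hr' hf hfr ht
  exact ⟨⟨_, hΦ, fun Ψ hΨ => hΨ.unique hr hr' hΦ⟩,
    fun Ψ hΨ x => CellularForm.isChainMapAt_iff.1 (hΨ.isChainMapAt hr hr' hf ht x)⟩
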